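/- arXiv:1702.04582 — 6 statements merged into one kernel-verified Lean document; each statement's English description precedes it below -/
import Mathlib

section
/- Let m and n be positive integers with m ≤ n, let U be an m-dimensional K-subspace of F with basis {α_1, ..., α_m}, and let v : F → K^n be a fixed K-linear coordinate isomorphism. Then the K-linear map φ : L_{F/K} → K^{m×n} given by φ(f) = (v(f(α_1)), ..., v(f(α_m)))^T is surjective, and φ(f) = 0 if and only if θ_U divides f; consequently φ induces a K-linear isomorphism L_{F/K}/(θ_U) ≅ K^{m×n}. -/
open Polynomial

/-- The set `L_{F/K}` of `K`-linearized polynomials over `F`: polynomials all of whose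
nonzero coefficients sit in degrees that are powers of `q = |K|`. -/
def linearizedPolys (q : ℕ) (F : Type*) [Field F] : Set (Polynomial F) :=
  {p | ∀ i : ℕ, p.coeff i ≠ 0 → ∃ j : ℕ, i = q ^ j}

/-- The polynomial `θ_U = ∏_{u ∈ U} (X - u)` associated with a (finite) `K`-subspace
`U` of `F`. -/
noncomputable def thetaPoly {K F : Type*} [Field K] [Field F] [Fintype F] [Algebra K F]
    (U : Submodule K F) : Polynomial F :=
  ∏ u ∈ (Set.toFinite (U : Set F)).toFinset, (Polynomial.X - Polynomial.C u)

section Closure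
variable {F : Type*} [Field F] {q : ℕ}

lemma lin_X : (X : F[X]) ∈ linearizedPolys q F := by
  intro i hi
  rw [coeff_X] at hi
  exact ⟨0, by rw [pow_zero]; by_contra h; simp [Ne.symm h] at hi⟩

lemma lin_sub {f g : F[X]} (hf : f ∈ linearizedPolys q F) (hg : g ∈ linearizedPolys q F) :
    f - g ∈ linearizedPolys q F := by
  intro i hi
  rw [coeff_sub] at hi
  rcases sub_ne_zero.mp hi |> fun h => (em (f.coeff i ≠ 0)) with h | h
  · exact hf i h
  · exact hg i (by push_neg at h; intro hg0; exact hi (by rw [h, hg0, sub_zero]))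

lemma lin_C_mul {f : F[X]} (a : F) (hf : f ∈ linearizedPolys q F) :
    C a * f ∈ linearizedPolys q F := by
  intro i hi
  rw [coeff_C_mul] at hi
  exact hf i fun h => hi (by rw [h, mul_zero])

lemma lin_sum {ι : Type*} (s : Finset ι) (f : ι → F[X])
    (hf : ∀ i ∈ s, f i ∈ linearizedPolys q F) :
    (∑ i ∈ s, f i) ∈ linearizedPolys q F := by
  intro i hi
  rw [finset_sum_coeff] at hi
  obtain ⟨l, hl, hne⟩ := Finset.exists_ne_zero_of_sum_ne_zero hi
  exact hf l hl i hne

lemma lin_pow_q {p k : ℕ} [Fact p.Prime] [CharP F p] (hq : q = p ^ k)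
    {f : F[X]} (hf : f ∈ linearizedPolys q F) : f ^ q ∈ linearizedPolys q F := by
  haveI : CharP F[X] p := Polynomial.instCharP p
  have hfq : f ^ q = ∑ e ∈ f.support, C (f.coeff e ^ p ^ k) * X ^ (e * p ^ k) := by
    conv_lhs => rw [← sum_C_mul_X_pow_eq f]
    rw [Polynomial.sum, hq, sum_pow_char_pow]
    refine Finset.sum_congr rfl fun e he => ?_
    rw [mul_pow, ← C_pow, ← pow_mul]
  rw [hfq]
  intro i hi
  rw [finset_sum_coeff] at hi
  obtain ⟨e, he, hne⟩ := Finset.exists_ne_zero_of_sum_ne_zero hi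
  rw [coeff_C_mul, coeff_X_pow] at hne
  have hie : i = e * p ^ k := by by_contra h; simp [h] at hne
  obtain ⟨j, rfl⟩ := hf e (mem_support_iff.mp he)
  exact ⟨j + 1, by rw [hie, hq, pow_succ]⟩

end Closure

section Eval
variable {K F : Type*} [Field K] [Fintype K] [Field F] [Algebra K F] {q : ℕ}

lemma algmap_pow_q (hq : q = Fintype.card K) (c : K) (j : ℕ) :
    (algebraMap K F c) ^ q ^ j = algebraMap K F c := by
  induction j with
  | zero => rw [pow_zero, pow_one]
  | succ j ih => rw [pow_succ, pow_mul, ih, ← map_pow, hq, FiniteField.pow_card]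

variable {p k : ℕ} [Fact p.Prime] [CharP F p]

lemma lin_eval_add (hq : q = p ^ k) {f : F[X]} (hf : f ∈ linearizedPolys q F) (x y : F) :
    f.eval (x + y) = f.eval x + f.eval y := by
  rw [eval_eq_sum, eval_eq_sum, eval_eq_sum, Polynomial.sum_def, Polynomial.sum_def,
    Polynomial.sum_def, ← Finset.sum_add_distrib]
  refine Finset.sum_congr rfl fun e he => ?_
  obtain ⟨j, rfl⟩ := hf e (mem_support_iff.mp he)
  rw [hq, ← pow_mul, add_pow_char_pow, mul_add]

omit [Fact p.Prime] [CharP F p] in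
lemma lin_eval_smul (hqK : q = Fintype.card K) {f : F[X]}
    (hf : f ∈ linearizedPolys q F) (c : K) (x : F) :
    f.eval (c • x) = c • f.eval x := by
  rw [Algebra.smul_def, Algebra.smul_def, eval_eq_sum, eval_eq_sum, Polynomial.sum_def,
    Polynomial.sum_def, Finset.mul_sum]
  refine Finset.sum_congr rfl fun e he => ?_
  obtain ⟨j, rfl⟩ := hf e (mem_support_iff.mp he)
  rw [mul_pow, algmap_pow_q hqK]; ring

lemma lin_comp_X_sub_C (hq : q = p ^ k) {f : F[X]} (hf : f ∈ linearizedPolys q F) (a : F) :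
    f.comp (X - C a) = f - C (f.eval a) := by
  haveI : CharP F[X] p := Polynomial.instCharP p
  rw [comp_eq_sum_left, Polynomial.sum_def]
  have h1 : ∀ e ∈ f.support,
      C (f.coeff e) * (X - C a) ^ e = C (f.coeff e) * X ^ e - C (f.coeff e * a ^ e) := by
    intro e he
    obtain ⟨j, rfl⟩ := hf e (mem_support_iff.mp he)
    rw [hq, ← pow_mul, sub_pow_char_pow, ← C_pow, mul_sub, ← C_mul]
  rw [Finset.sum_congr rfl h1, Finset.sum_sub_distrib]
  congr 1
  · conv_rhs => rw [← sum_C_mul_X_pow_eq f]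
    rw [Polynomial.sum_def]
  · rw [eval_eq_sum, Polynomial.sum_def, map_sum]
end Eval

section Theta
variable {K F : Type*} [Field K] [Fintype K] [Field F] [Fintype F] [Algebra K F]

omit [Fintype K] in
lemma theta_eval (U : Submodule K F) (x : F) :
    (thetaPoly U).eval x = ∏ u ∈ (Set.toFinite (U : Set F)).toFinset, (x - u) := by
  rw [thetaPoly, eval_prod]; simp

omit [Fintype K] in
lemma theta_eval_eq_zero_iff (U : Submodule K F) (x : F) :
    (thetaPoly U).eval x = 0 ↔ x ∈ U := by
  rw [theta_eval, Finset.prod_eq_zero_iff]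
  constructor
  · rintro ⟨u, hu, h⟩
    rw [sub_eq_zero] at h; subst h; exact (Set.Finite.mem_toFinset _).mp hu
  · intro hx; exact ⟨x, (Set.Finite.mem_toFinset _).mpr hx, sub_self x⟩

omit [Fintype K] in
lemma theta_dvd {U : Submodule K F} {f : F[X]} (h : ∀ u ∈ U, f.eval u = 0) :
    thetaPoly U ∣ f := by
  refine Finset.prod_dvd_of_coprime
    (fun u _ u' _ hne => pairwise_coprime_X_sub_C Function.injective_id hne) fun u hu => ?_
  rw [dvd_iff_isRoot]; exact h u ((Set.Finite.mem_toFinset _).mp hu)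

lemma prod_X_sub_smul {q : ℕ} (hq : q = Fintype.card K) (a : F) (ha : a ≠ 0) :
    ∏ c : K, (X - C (algebraMap K F c * a)) = X ^ q - C (a ^ (q - 1)) * X := by
  have hq2 : 1 < q := hq ▸ Fintype.one_lt_card
  have hmL : (∏ c : K, (X - C (algebraMap K F c * a))).Monic :=
    monic_prod_of_monic _ _ fun c _ => monic_X_sub_C _
  have hinj : Function.Injective fun c : K => algebraMap K F c * a :=
    fun c c' h => (algebraMap K F).injective (mul_right_cancel₀ ha h)
  have hqc : ∀ c : K, (algebraMap K F c) ^ q = algebraMap K F c := by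
    intro c; rw [← map_pow, hq, FiniteField.pow_card]
  have hdegR : (X ^ q - C (a ^ (q - 1)) * X : F[X]).degree = q := by
    rw [degree_sub_eq_left_of_degree_lt, degree_X_pow]
    rw [degree_X_pow]
    calc (C (a ^ (q - 1)) * X : F[X]).degree ≤ 1 := degree_C_mul_X_le _
      _ < (q : WithBot ℕ) := by exact_mod_cast hq2
  have hmR : (X ^ q - C (a ^ (q - 1)) * X : F[X]).Monic := by
    have : (X ^ q - C (a ^ (q - 1)) * X : F[X]).leadingCoeff = 1 := by
      rw [leadingCoeff, natDegree_eq_of_degree_eq_some hdegR]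
      rw [coeff_sub, coeff_X_pow, if_pos rfl, coeff_C_mul, coeff_X, if_neg (by omega), mul_zero,
        sub_zero]
    exact this
  have hdvd : (∏ c : K, (X - C (algebraMap K F c * a))) ∣ X ^ q - C (a ^ (q - 1)) * X := by
    refine Finset.prod_dvd_of_coprime
      (fun c _ c' _ hne => pairwise_coprime_X_sub_C hinj hne) fun c _ => ?_
    rw [dvd_iff_isRoot, IsRoot, eval_sub, eval_pow, eval_X, eval_mul, eval_C, eval_X]
    rw [mul_pow, hqc, sub_eq_zero,
      show a ^ (q - 1) * (algebraMap K F c * a) = algebraMap K F c * (a ^ (q - 1) * a) by ring,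
      ← pow_succ, Nat.sub_add_cancel (by omega)]
  refine eq_of_dvd_of_natDegree_le_of_leadingCoeff hdvd ?_ ?_
  · rw [natDegree_eq_of_degree_eq_some hdegR, natDegree_prod _ _ fun c _ => X_sub_C_ne_zero _]
    simp only [natDegree_X_sub_C]
    rw [Finset.sum_const, Finset.card_univ, smul_eq_mul, mul_one, hq]
  · rw [hmL.leadingCoeff, hmR.leadingCoeff]

lemma theta_lin {q p k : ℕ} [Fact p.Prime] [CharP F p] (hq : q = Fintype.card K)
    (hqpk : q = p ^ k) (V : Submodule K F) : thetaPoly V ∈ linearizedPolys q F := by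
  classical
  have main : ∀ s : Finset F,
      thetaPoly (Submodule.span K (s : Set F)) ∈ linearizedPolys q F := by
    intro s
    induction s using Finset.induction_on with
    | empty =>
      have h0 : (Set.toFinite ((Submodule.span K ((∅ : Finset F) : Set F) : Submodule K F)
          : Set F)).toFinset = {0} := by
        ext x
        rw [Set.Finite.mem_toFinset, Finset.mem_singleton, SetLike.mem_coe, Finset.coe_empty,
          Submodule.span_empty, Submodule.mem_bot]
      have hX : thetaPoly (Submodule.span K ((∅ : Finset F) : Set F)) = X := by
        rw [thetaPoly, h0, Finset.prod_singleton, map_zero, sub_zero]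
      rw [hX]; exact lin_X
    | @insert β s hβs IH =>
      set W := Submodule.span K (s : Set F) with hW
      by_cases hβ : β ∈ W
      · rw [Finset.coe_insert, Submodule.span_insert_eq_span hβ]; exact IH
      · set a := (thetaPoly W).eval β with haa
        have ha : a ≠ 0 := fun h => hβ ((theta_eval_eq_zero_iff W β).mp h)
        set Wfin := (Set.toFinite (W : Set F)).toFinset with hWfin
        have hmem : ∀ x : F, x ∈ Submodule.span K ((insert β s : Finset F) : Set F) ↔
            ∃ cw : K × F, cw.2 ∈ W ∧ x = cw.1 • β + cw.2 := by
          intro x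
          rw [Finset.coe_insert, Submodule.span_insert]
          constructor
          · intro hx
            obtain ⟨y, hy, z, hz, rfl⟩ := Submodule.mem_sup.mp hx
            obtain ⟨c, rfl⟩ := Submodule.mem_span_singleton.mp hy
            exact ⟨(c, z), hz, rfl⟩
          · rintro ⟨⟨c, w⟩, hw, rfl⟩
            exact Submodule.add_mem_sup
              (Submodule.smul_mem _ c (Submodule.mem_span_singleton_self β)) hw
        have hfin : (Set.toFinite ((Submodule.span K ((insert β s : Finset F) : Set F)
              : Submodule K F) : Set F)).toFinset
            = Finset.image (fun cw : K × F => cw.1 • β + cw.2) (Finset.univ ×ˢ Wfin) := by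
          ext x
          rw [Set.Finite.mem_toFinset, Finset.mem_image, SetLike.mem_coe, hmem]
          constructor
          · rintro ⟨⟨c, w⟩, hw, rfl⟩
            exact ⟨(c, w), Finset.mem_product.mpr
              ⟨Finset.mem_univ _, (Set.Finite.mem_toFinset _).mpr hw⟩, rfl⟩
          · rintro ⟨⟨c, w⟩, hcw, rfl⟩
            exact ⟨(c, w), (Set.Finite.mem_toFinset _).mp (Finset.mem_product.mp hcw).2, rfl⟩
        have hinj : ∀ cw ∈ (Finset.univ ×ˢ Wfin), ∀ cw' ∈ (Finset.univ ×ˢ Wfin),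
            (fun cw : K × F => cw.1 • β + cw.2) cw = (fun cw : K × F => cw.1 • β + cw.2) cw'
            → cw = cw' := by
          rintro ⟨c, w⟩ hcw ⟨c', w'⟩ hcw' h
          simp only at h
          have hwW : w ∈ W := (Set.Finite.mem_toFinset _).mp (Finset.mem_product.mp hcw).2
          have hwW' : w' ∈ W := (Set.Finite.mem_toFinset _).mp (Finset.mem_product.mp hcw').2
          have hcc : c = c' := by
            by_contra hne
            have h2 : (c - c') • β = w' - w := by
              rw [sub_smul, sub_eq_sub_iff_add_eq_add, h, add_comm]
            have h3 : (c - c') • β ∈ W := h2 ▸ Submodule.sub_mem _ hwW' hwW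
            have h4 := Submodule.smul_mem W (c - c')⁻¹ h3
            rw [inv_smul_smul₀ (sub_ne_zero.mpr hne)] at h4
            exact hβ h4
          subst hcc
          rw [add_left_cancel h]
        have hθW : (∏ w ∈ Wfin, (X - C w)) = thetaPoly W := by rw [thetaPoly]
        have hinner : ∀ c : K, ∏ w ∈ Wfin, (X - C (c • β + w))
            = thetaPoly W - C (algebraMap K F c * a) := by
          intro c
          have h1 : ∀ w ∈ Wfin, (X - C (c • β + w)) = (X - C w).comp (X - C (c • β)) := by
            intro w _
            rw [sub_comp, X_comp, C_comp, map_add, sub_sub]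
          rw [Finset.prod_congr rfl h1, ← prod_comp, hθW,
            lin_comp_X_sub_C hqpk IH (c • β), lin_eval_smul hq IH c β, Algebra.smul_def, ← haa]
        have hkey : thetaPoly (Submodule.span K ((insert β s : Finset F) : Set F))
            = (thetaPoly W) ^ q - C (a ^ (q - 1)) * thetaPoly W := by
          rw [thetaPoly, hfin, Finset.prod_image hinj, Finset.prod_product,
            Finset.prod_congr rfl (fun c _ => hinner c)]
          have hid := congrArg (fun P => aeval (thetaPoly W) P) (prod_X_sub_smul hq a ha)
          simpa only [map_prod, map_sub, map_pow, map_mul, aeval_X, aeval_C,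
            Polynomial.algebraMap_eq] using hid
        rw [hkey]
        exact lin_sub (lin_pow_q hqpk IH) (lin_C_mul _ IH)
  have h2 := main (Set.toFinite (V : Set F)).toFinset
  rwa [Set.Finite.coe_toFinset, Submodule.span_eq] at h2
end Theta

/-- The `K`-linear map `φ : L_{F/K} → K^{m×n}`, `φ(f) = (v(f(α₁)), …, v(f(α_m)))ᵀ`, is
surjective and `φ(f) = 0` iff `θ_U ∣ f`; consequently it induces a `K`-linear
isomorphism `L_{F/K}/(θ_U) ≅ K^{m×n}`. -/
theorem linearized_polys_mod_thetaU_iso_matrices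
    (K F : Type*) [Field K] [Fintype K] [Field F] [Fintype F] [Algebra K F]
    (q m n : ℕ) (hq : q = Fintype.card K) (hn : Module.finrank K F = n)
    (hm : 0 < m) (hmn : m ≤ n)
    (U : Submodule K F) (hU : Module.finrank K U = m)
    (α : Fin m → F) (hα : LinearIndependent K α)
    (hαspan : Submodule.span K (Set.range α) = U)
    (v : F ≃ₗ[K] (Fin n → K))
    (φ : Polynomial F → Matrix (Fin m) (Fin n) K)
    (hφ : ∀ p : Polynomial F, φ p = Matrix.of fun i j => v (p.eval (α i)) j) :
    (∀ f ∈ linearizedPolys q F, ∀ g ∈ linearizedPolys q F,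
        φ (f + g) = φ f + φ g) ∧
    (∀ c : K, ∀ f ∈ linearizedPolys q F,
        φ (Polynomial.C (algebraMap K F c) * f) = c • φ f) ∧
    (∀ M : Matrix (Fin m) (Fin n) K, ∃ f ∈ linearizedPolys q F, φ f = M) ∧
    (∀ f ∈ linearizedPolys q F, (φ f = 0 ↔ thetaPoly U ∣ f)) := by
  classical
  set p := ringChar K with hp
  haveI hpf : Fact p.Prime := Fact.mk (CharP.char_is_prime K p)
  haveI : CharP F p := charP_of_injective_algebraMap (algebraMap K F).injective p
  obtain ⟨k, -, hcard⟩ := FiniteField.card K p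
  have hqpk : q = p ^ (k : ℕ) := by rw [hq, hcard]
  refine ⟨?_, ?_, ?_, ?_⟩
  · intro f _ g _
    ext i j
    simp [hφ, Matrix.add_apply]
  · intro c f _
    ext i j
    simp only [hφ, Matrix.smul_apply, Matrix.of_apply, eval_mul, eval_C,
      ← Algebra.smul_def, map_smul, Pi.smul_apply, smul_eq_mul]
  · intro M
    set V : Fin m → Submodule K F := fun i => Submodule.span K (α '' {i}ᶜ) with hV
    have hαV : ∀ i, (thetaPoly (V i)).eval (α i) ≠ 0 := by
      intro i h
      exact hα.notMem_span_image (by simp) ((theta_eval_eq_zero_iff _ _).mp h)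
    set f : Polynomial F :=
      ∑ i : Fin m, C (v.symm (M i) / (thetaPoly (V i)).eval (α i)) * thetaPoly (V i) with hf
    refine ⟨f, lin_sum _ _ fun i _ => lin_C_mul _ (theta_lin hq hqpk _), ?_⟩
    have heval : ∀ i, f.eval (α i) = v.symm (M i) := by
      intro i
      rw [hf, eval_finset_sum, Finset.sum_eq_single i]
      · rw [eval_mul, eval_C, div_mul_cancel₀ _ (hαV i)]
      · intro l _ hli
        have hz : (thetaPoly (V l)).eval (α i) = 0 := (theta_eval_eq_zero_iff _ _).mpr
          (Submodule.subset_span ⟨i, by simp [Ne.symm hli], rfl⟩)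
        rw [eval_mul, hz, mul_zero]
      · intro h; exact absurd (Finset.mem_univ i) h
    ext i j
    rw [hφ]
    simp [heval i]
  · intro f hf
    have hiff : φ f = 0 ↔ ∀ i, f.eval (α i) = 0 := by
      constructor
      · intro h i
        have hvz : v (f.eval (α i)) = 0 := by
          funext j
          have h2 := congrFun (congrFun h i) j
          rw [hφ] at h2
          simpa using h2
        exact (LinearEquiv.map_eq_zero_iff v).mp hvz
      · intro h; ext i j; rw [hφ]; simp [h i]
    rw [hiff]
    constructor
    · intro h
      let L : F →ₗ[K] F :=
        { toFun := fun x => f.eval x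
          map_add' := lin_eval_add hqpk hf
          map_smul' := fun c x => lin_eval_smul hq hf c x }
      have hker : U ≤ LinearMap.ker L := by
        rw [← hαspan, Submodule.span_le]
        rintro _ ⟨i, rfl⟩
        exact LinearMap.mem_ker.mpr (h i)
      exact theta_dvd fun u hu => hker hu
    · rintro ⟨g, rfl⟩ i
      have hαU : α i ∈ U := hαspan ▸ Submodule.subset_span ⟨i, rfl⟩
      rw [eval_mul, (theta_eval_eq_zero_iff U _).mpr hαU, zero_mul]
end

section
/- Let U be an m-dimensional K-subspace of F and let s be a positive integer with gcd(n,s) = 1. Then the set {a_0 X + a_1 X^{q^s} + ... + a_{m−1} X^{q^{s(m−1)}} : a_0, ..., a_{m−1} ∈ F} is a complete system of distinct representatives for L_{F/K}/(θ_U); equivalently, for every f ∈ L_{F/K} there exists a unique tuple (a_0, ..., a_{m−1}) ∈ F^m such that f(x) = Σ_{i=0}^{m−1} a_i x^{q^{si}} for all x ∈ U. -/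
/-!
Put `σ = φ ^ s`, where `φ x = x ^ q` is the Frobenius of `F/K`; as `gcd(n, s) = 1`, the fixed
field of `σ` is `K`. Evaluating a linearized polynomial on `U` gives a `K`-linear map `U → F`, and
these maps form an `F`-space of dimension `m`, so it suffices that the restrictions of
`σ⁰, …, σ^(m-1)` to `U` are `F`-linearly independent. That is: a nonzero `σ`-polynomial
`∑_{i<d} bᵢ σⁱ` vanishes on no `K`-subspace `V` of dimension `≥ d`. By induction on `d`: after
rescaling, `1 ∈ V`, so `∑ bᵢ = 0`, and summation by parts turns the polynomial into one of
`σ`-degree `< d - 1` composed with `σ - 1`; the latter has kernel `K`, so it maps `V` onto a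
subspace of dimension `≥ dim V - 1`.
-/

open Finset Module Polynomial

theorem Submodule.finrank_le_finrank_map_add_finrank_ker {K M N : Type*} [Field K]
    [AddCommGroup M] [Module K M] [AddCommGroup N] [Module K N] (f : M →ₗ[K] N)
    (V : Submodule K M) [FiniteDimensional K V] [FiniteDimensional K (LinearMap.ker f)] :
    finrank K V ≤ finrank K (V.map f) + finrank K (LinearMap.ker f) := by
  have hker : finrank K (LinearMap.ker (f.domRestrict V)) ≤ finrank K (LinearMap.ker f) := by
    rw [← Submodule.finrank_map_subtype_eq]
    refine Submodule.finrank_mono ?_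
    rintro _ ⟨x, hx, rfl⟩
    exact hx
  have := (f.domRestrict V).finrank_range_add_finrank_ker
  rw [LinearMap.range_domRestrict] at this
  omega

theorem eq_zero_of_forall_le_sum_range_succ_eq_zero {M : Type*} [AddCommGroup M] {b : ℕ → M}
    {d : ℕ} (h : ∀ i ≤ d, ∑ j ∈ range (i + 1), b j = 0) : ∀ i ≤ d, b i = 0 := by
  intro i hi
  cases i with
  | zero => simpa using h 0 hi
  | succ i => simpa [sum_range_succ _ (i + 1), h i (by omega)] using h (i + 1) hi

namespace AlgHom

variable {K F : Type*} [Field K] [Field F] [Algebra K F] (σ : F →ₐ[K] F)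

theorem sum_range_succ_mul_pow_apply_by_parts (c : ℕ → F) (d : ℕ) (y : F) :
    ∑ i ∈ range (d + 1), c i * (σ ^ i) y =
      (∑ j ∈ range (d + 1), c j) * (σ ^ d) y
        - ∑ i ∈ range d, (∑ j ∈ range (i + 1), c j) * (σ ^ i) (σ y - y) := by
  have := sum_range_by_parts (fun i => (σ ^ i) y) c (d + 1)
  simp only [smul_eq_mul, add_tsub_cancel_right] at this
  simp only [mul_comm (c _), this, map_sub, pow_succ, mul_apply, mul_comm _ (∑ j ∈ range _, c j)]

variable {σ} in
theorem finrank_le_finrank_map_sub_id_add_one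
    (hσ : ∀ x, σ x = x → x ∈ Set.range (algebraMap K F))
    (V : Submodule K F) [FiniteDimensional K V] :
    finrank K V ≤ finrank K (V.map (σ.toLinearMap - LinearMap.id)) + 1 := by
  have hle : LinearMap.ker (σ.toLinearMap - LinearMap.id) ≤
      LinearMap.range (Algebra.linearMap K F) := fun x hx => hσ x (sub_eq_zero.mp hx)
  have := Submodule.finiteDimensional_of_le hle
  have hker : finrank K (LinearMap.ker (σ.toLinearMap - LinearMap.id)) ≤ 1 :=
    (Submodule.finrank_mono hle).trans ((LinearMap.finrank_range_le _).trans (finrank_self K).le)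
  have := V.finrank_le_finrank_map_add_finrank_ker (σ.toLinearMap - LinearMap.id)
  omega

variable {σ} in
theorem eq_zero_of_forall_mem_sum_range_mul_pow_apply_eq_zero
    (hσ : ∀ x, σ x = x → x ∈ Set.range (algebraMap K F)) :
    ∀ (d : ℕ) (b : ℕ → F) (V : Submodule K F), d ≤ finrank K V →
      (∀ x ∈ V, ∑ i ∈ range d, b i * (σ ^ i) x = 0) → ∀ i < d, b i = 0 := by
  intro d
  induction d with
  | zero => exact fun _ _ _ _ i hi => absurd hi i.not_lt_zero
  | succ d ih =>
    intro b V hd hb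
    have : FiniteDimensional K V := Module.finite_of_finrank_pos (by omega)
    obtain ⟨u, huV, hu⟩ := Submodule.exists_mem_ne_zero_of_ne_bot
      (Submodule.one_le_finrank_iff.mp (show 0 < finrank K V by omega))
    set V' := V.map (LinearMap.mulLeft K u⁻¹)
    set c : ℕ → F := fun i => b i * (σ ^ i) u
    have hc : ∀ y ∈ V', ∑ i ∈ range (d + 1), c i * (σ ^ i) y = 0 := by
      rintro _ ⟨x, hx, rfl⟩
      rw [← hb x hx]
      refine sum_congr rfl fun i _ => ?_
      rw [LinearMap.mulLeft_apply, mul_assoc, ← map_mul, mul_inv_cancel_left₀ hu]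
    have hsum : ∑ i ∈ range (d + 1), c i = 0 := by
      simpa using hc 1 ⟨u, huV, inv_mul_cancel₀ hu⟩
    have hW : d ≤ finrank K (V'.map (σ.toLinearMap - LinearMap.id)) := by
      have := finrank_le_finrank_map_sub_id_add_one hσ V'
      rw [← (Submodule.equivMapOfInjective _ (mul_right_injective₀ (inv_ne_zero hu)) V).finrank_eq]
        at this
      omega
    have hcW : ∀ z ∈ V'.map (σ.toLinearMap - LinearMap.id),
        ∑ i ∈ range d, (∑ j ∈ range (i + 1), c j) * (σ ^ i) z = 0 := by
      rintro _ ⟨y, hy, rfl⟩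
      have := sum_range_succ_mul_pow_apply_by_parts σ c d y
      rw [hc y hy, hsum, zero_mul, zero_sub, eq_comm, neg_eq_zero] at this
      simpa using this
    have hc0 : ∀ i ≤ d, c i = 0 := eq_zero_of_forall_le_sum_range_succ_eq_zero fun i hi =>
      (Nat.lt_or_eq_of_le hi).elim (ih _ _ hW hcW i) fun h => h ▸ hsum
    intro i hi
    exact (mul_eq_zero.mp (hc0 i (by omega))).resolve_right ((_root_.map_ne_zero _).mpr hu)

variable {σ} in
theorem linearIndependent_pow_comp_subtype
    (hσ : ∀ x, σ x = x → x ∈ Set.range (algebraMap K F)) {U : Submodule K F} {m : ℕ}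
    (hm : m ≤ finrank K U) :
    LinearIndependent F fun i : Fin m => (σ ^ (i : ℕ)).toLinearMap ∘ₗ U.subtype := by
  rw [Fintype.linearIndependent_iff]
  intro g hg i
  have hvan : ∀ x ∈ U, ∑ j ∈ range m, (if h : j < m then g ⟨j, h⟩ else 0) * (σ ^ j) x = 0 := by
    intro x hx
    have := LinearMap.congr_fun hg ⟨x, hx⟩
    rw [← Fin.sum_univ_eq_sum_range (fun j => (if h : j < m then g ⟨j, h⟩ else 0) * (σ ^ j) x)]
    simpa using this
  simpa using eq_zero_of_forall_mem_sum_range_mul_pow_apply_eq_zero hσ m _ U hm hvan i i.isLt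

end AlgHom

namespace FiniteField

variable {K F : Type*} [Field K] [Fintype K] [Field F] [Fintype F] [Algebra K F]

omit [Fintype F] in
theorem frobeniusAlgHom_pow_apply (j : ℕ) (x : F) :
    (frobeniusAlgHom K F ^ j) x = x ^ Fintype.card K ^ j := by
  rw [AlgHom.coe_pow, coe_frobeniusAlgHom, pow_iterate]

theorem mem_range_algebraMap_of_frobeniusAlgHom_pow_apply_eq {s : ℕ}
    (hs : (finrank K F).Coprime s) {x : F} (hx : (frobeniusAlgHom K F ^ s) x = x) :
    x ∈ Set.range (algebraMap K F) := by
  have hn : Function.IsPeriodicPt (frobeniusAlgHom K F) (finrank K F) x := by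
    rw [Function.IsPeriodicPt, Function.IsFixedPt, ← AlgHom.coe_pow, ← orderOf_frobeniusAlgHom,
      pow_orderOf_eq_one, AlgHom.one_apply]
  have hs' : Function.IsPeriodicPt (frobeniusAlgHom K F) s x := by
    rwa [Function.IsPeriodicPt, Function.IsFixedPt, ← AlgHom.coe_pow]
  have hfix : x ^ Fintype.card K = x := by
    simpa [hs, Function.IsPeriodicPt, Function.IsFixedPt] using hn.gcd hs'
  rw [IsGalois.mem_range_algebraMap_iff_fixed]
  intro τ
  obtain ⟨k, rfl⟩ := (bijective_frobeniusAlgEquivOfAlgebraic_pow K F).2 τ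
  rw [AlgEquiv.coe_pow, coe_frobeniusAlgEquivOfAlgebraic]
  exact Function.iterate_fixed hfix k

end FiniteField

theorem isLinearMap_eval_of_mem_linearizedPolys {K F : Type*} [Field K] [Fintype K] [Field F]
    [Algebra K F] {f : F[X]} (hf : f ∈ linearizedPolys (Fintype.card K) F) :
    IsLinearMap K fun x => f.eval x := by
  have hterm : ∀ i ∈ f.support, ∃ j, ∀ x : F, x ^ i = (FiniteField.frobeniusAlgHom K F ^ j) x :=
    fun i hi => (hf i (mem_support_iff.mp hi)).imp fun j hj x => by
      rw [hj, FiniteField.frobeniusAlgHom_pow_apply]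
  constructor
  · intro x y
    simp only [eval_eq_sum, sum_def, ← sum_add_distrib]
    refine sum_congr rfl fun i hi => ?_
    obtain ⟨j, hj⟩ := hterm i hi
    rw [hj, hj, hj, map_add, mul_add]
  · intro c x
    simp only [eval_eq_sum, sum_def, smul_sum]
    refine sum_congr rfl fun i hi => ?_
    obtain ⟨j, hj⟩ := hterm i hi
    rw [hj, hj, map_smul, mul_smul_comm]

theorem complete_system_of_representatives_general
    (K F : Type*) [Field K] [Fintype K] [Field F] [Fintype F] [Algebra K F]
    (q m n s : ℕ) (hq : q = Fintype.card K) (hn : Module.finrank K F = n)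
    (hgcd : Nat.gcd n s = 1)
    (U : Submodule K F) (hU : Module.finrank K U = m) :
    ∀ f ∈ linearizedPolys q F,
      ∃! a : Fin m → F, ∀ x ∈ U,
        f.eval x = ∑ i : Fin m, a i * x ^ q ^ (s * (i : ℕ)) := by
  subst hq hn
  intro f hf
  have hσ (x : F) (hx : (FiniteField.frobeniusAlgHom K F ^ s) x = x) :
      x ∈ Set.range (algebraMap K F) :=
    FiniteField.mem_range_algebraMap_of_frobeniusAlgHom_pow_apply_eq hgcd hx
  have hcard : Fintype.card (Fin m) = finrank F (U →ₗ[K] F) := by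
    rw [Fintype.card_fin, finrank_linearMap_self, hU]
  let basis := basisOfLinearIndependentOfCardEqFinrank' _
    (AlgHom.linearIndependent_pow_comp_subtype hσ hU.ge) hcard
  let T := (isLinearMap_eval_of_mem_linearizedPolys hf).mk' _ ∘ₗ U.subtype
  refine (existsUnique_congr fun a => ?_).mp (basis.equivFun.symm.bijective.existsUnique T)
  simp [basis, T, Basis.equivFun_symm_apply, LinearMap.ext_iff, eq_comm, ← pow_mul,
    -AlgHom.coe_pow, FiniteField.frobeniusAlgHom_pow_apply]

/-- For an `m`-dimensional `K`-subspace `U` of `F` and `s` with `gcd(n,s) = 1`, the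
polynomials `a₀X + a₁X^{q^s} + ⋯ + a_{m-1}X^{q^{s(m-1)}}` form a complete system of
distinct representatives for `L_{F/K}/(θ_U)`: every `f ∈ L_{F/K}` agrees on `U` with
exactly one of them. -/
theorem complete_system_of_representatives
    (K F : Type*) [Field K] [Fintype K] [Field F] [Fintype F] [Algebra K F]
    (q m n s : ℕ) (hq : q = Fintype.card K) (hn : Module.finrank K F = n)
    (hs : 0 < s) (hgcd : Nat.gcd n s = 1)
    (U : Submodule K F) (hU : Module.finrank K U = m) :
    ∀ f ∈ linearizedPolys q F,
      ∃! a : Fin m → F, ∀ x ∈ U,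
        f.eval x = ∑ i : Fin m, a i * x ^ q ^ (s * (i : ℕ)) :=
  complete_system_of_representatives_general K F q m n s hq hn hgcd U hU
end

section
/- Let k, s, m, n be positive integers with k < m ≤ n and gcd(s,n) = 1, and let W be an m-dimensional K-subspace of F. Suppose ψ ∈ L_{F/K} is such that for every f ∈ G_{k,s} there exists g ∈ G_{k,s} with f(ψ(x)) = g(x) for all x ∈ W (i.e., π_W(f ∘ ψ) ∈ π_W(G_{k,s}) for all f ∈ G_{k,s}). Then there exists b ∈ F such that ψ(x) = bx for all x ∈ W (i.e., ψ ≡ bX (mod θ_W)). -/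
/-- The set `G_{k,s}` of linearized polynomials
`a₀ X + a₁ X^{q^s} + ⋯ + a_{k-1} X^{q^{s(k-1)}}` with `a₀, …, a_{k-1} ∈ F`. -/
def Gks (q k s : ℕ) (F : Type*) [Field F] : Set (Polynomial F) :=
  {p | ∃ a : Fin k → F, p = ∑ i : Fin k, Polynomial.C (a i) * Polynomial.X ^ q ^ (s * (i : ℕ))}

/-!
Write `σ x = x ^ q ^ s`. Because `gcd(s, n) = 1`, the fixed field of `σ` is `K`, and then a
nonzero σ-polynomial `∑_{u ≤ d} c_u σ^u` has at most `q ^ d` zeros: rescaling by a nonzero zero `v`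
makes the coefficients sum to zero, so the σ-polynomial factors through `x ↦ σ x - x`, whose kernel
has `q` elements. Since `|W| = q ^ m > q ^ k`, a σ-polynomial of σ-degree `≤ k` vanishing on `W` is
zero. Now `f = X` gives `ψ = ∑_{i < k} a_i σ^i` on `W`. If `t ≥ 1` were the largest index with
`a_t ≠ 0`, then `σ^(k-t) ∘ ψ` would have σ-degree exactly `k` on `W`, yet agree there with an
element of `G_{k,s}`, of σ-degree `< k`.
-/

open Finset Polynomial

lemma AddMonoidHom.card_filter_mem_le {G H : Type*} [AddGroup G] [Fintype G] [AddMonoid H]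
    [DecidableEq H] (φ : G →+ H) (T : Finset H) :
    #{x | φ x ∈ T} ≤ #T * #{x | φ x = 0} := by
  rw [mul_comm]
  refine card_le_mul_card_image_of_maps_to (fun x hx => (mem_filter.mp hx).2) _ fun y _ => ?_
  rw [filter_filter]
  by_cases hy : y ∈ Set.range φ
  · exact (card_le_card fun x hx => by simp_all).trans
      (AddMonoidHom.card_fiber_eq_of_mem_range φ hy ⟨0, map_zero φ⟩).le
  · rw [filter_false_of_mem fun x _ h => hy ⟨x, h.2⟩, card_empty]
    exact Nat.zero_le _

lemma card_filter_mul_left {G₀ : Type*} [GroupWithZero G₀] [Fintype G₀] (p : G₀ → Prop)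
    [DecidablePred p] {v : G₀} (hv : v ≠ 0) : #{x | p (v * x)} = #{x | p x} :=
  card_equiv (Equiv.mulLeft₀ v hv) fun x => by simp

section SigmaEval

variable {F : Type*} [Field F] (σ : F →+* F)

/-- The σ-polynomial `∑_{u ≤ d} c u σ^u` evaluated at `x`; for `σ x = x ^ q ^ s` these are the
linearized polynomials `∑_{u ≤ d} c u X^{q^{su}}`. -/
def sigmaEval (c : ℕ → F) (d : ℕ) (x : F) : F :=
  ∑ u ∈ range (d + 1), c u * (σ ^ u) x

lemma sigmaEval_succ_of_coeff_eq_zero {c : ℕ → F} {d : ℕ} (hc : c (d + 1) = 0) (x : F) :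
    sigmaEval σ c (d + 1) x = sigmaEval σ c d x := by
  rw [sigmaEval, sum_range_succ, hc, zero_mul, add_zero, sigmaEval]

lemma sigmaEval_mul_left (c : ℕ → F) (d : ℕ) (v x : F) :
    sigmaEval σ c d (v * x) = sigmaEval σ (fun u => c u * (σ ^ u) v) d x := by
  simp only [sigmaEval, map_mul, mul_assoc]

lemma sigma_pow_sub_self (i : ℕ) (x : F) :
    (σ ^ i) (σ x - x) = (σ ^ (i + 1)) x - (σ ^ i) x := by
  rw [map_sub, pow_succ, RingHom.coe_mul, Function.comp_apply]

/-- The σ-analogue of dividing by `X - 1`, by summation by parts. -/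
lemma sigmaEval_eq_sigmaEval_sub_self {c : ℕ → F} {d : ℕ}
    (hc : ∑ u ∈ range (d + 2), c u = 0) (x : F) :
    sigmaEval σ c (d + 1) x =
      sigmaEval σ (fun j => -∑ i ∈ range (j + 1), c i) d (σ x - x) := by
  have hparts := sum_range_by_parts (fun u => (σ ^ u) x) c (d + 2)
  simp only [smul_eq_mul, hc, mul_zero, zero_sub] at hparts
  simp only [sigmaEval, sigma_pow_sub_self]
  calc ∑ u ∈ range (d + 1 + 1), c u * (σ ^ u) x
      = ∑ u ∈ range (d + 2), (σ ^ u) x * c u := sum_congr rfl fun u _ => mul_comm _ _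
    _ = _ := hparts
    _ = _ := by
      rw [← sum_neg_distrib]
      exact sum_congr rfl fun j _ => by ring

/-- Rescaling by the root `v` and dividing by `X - 1`. -/
lemma exists_sigmaEval_mul_left_eq_sigmaEval_sub_self {c : ℕ → F} {d : ℕ}
    (htop : c (d + 1) ≠ 0) {v : F} (hv : v ≠ 0) (hroot : sigmaEval σ c (d + 1) v = 0) :
    ∃ e : ℕ → F, e d ≠ 0 ∧ ∀ x, sigmaEval σ c (d + 1) (v * x) = sigmaEval σ e d (σ x - x) := by
  set c' : ℕ → F := fun u => c u * (σ ^ u) v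
  have hc' : ∑ u ∈ range (d + 2), c' u = 0 := by
    simpa [sigmaEval_mul_left, sigmaEval, c'] using hroot
  refine ⟨fun j => -∑ i ∈ range (j + 1), c' i, ?_, fun x => ?_⟩
  · have htop' : c' (d + 1) ≠ 0 := mul_ne_zero htop ((_root_.map_ne_zero _).mpr hv)
    rw [sum_range_succ] at hc'
    contrapose! htop'
    linear_combination hc' + htop'
  · rw [sigmaEval_mul_left, sigmaEval_eq_sigmaEval_sub_self σ hc']

lemma sigma_pow_apply_sum_mul_sigma_pow (j k : ℕ) (a : ℕ → F) (x : F) :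
    (σ ^ j) (∑ i ∈ range k, a i * (σ ^ i) x) = ∑ i ∈ range k, (σ ^ j) (a i) * (σ ^ (j + i)) x := by
  simp only [map_sum, map_mul, pow_add, RingHom.coe_mul, Function.comp_apply]

variable [Fintype F] [DecidableEq F]

theorem card_sigmaEval_eq_zero_le {q : ℕ} (hfix : #{x | σ x = x} ≤ q) :
    ∀ (d : ℕ) (c : ℕ → F), (∃ u ≤ d, c u ≠ 0) → #{x | sigmaEval σ c d x = 0} ≤ q ^ d := by
  have hq : 1 ≤ q := le_trans (card_pos.mpr ⟨0, by simp⟩) hfix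
  intro d
  induction d with
  | zero =>
    rintro c ⟨u, hu, hcu⟩
    obtain rfl : u = 0 := Nat.le_zero.mp hu
    refine (card_le_card fun x hx => ?_).trans (card_singleton 0).le
    simpa [sigmaEval, hcu] using hx
  | succ d ih =>
    rintro c ⟨u, hu, hcu⟩
    by_cases htop : c (d + 1) = 0
    · simp_rw [sigmaEval_succ_of_coeff_eq_zero σ htop]
      have hu' : u ≤ d := Nat.le_of_lt_succ (lt_of_le_of_ne hu fun h => hcu (h ▸ htop))
      exact (ih c ⟨u, hu', hcu⟩).trans (Nat.pow_le_pow_right hq d.le_succ)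
    by_cases hroot : ∃ v ≠ 0, sigmaEval σ c (d + 1) v = 0
    swap
    · push Not at hroot
      refine (card_le_card fun x hx => ?_).trans
        ((card_singleton 0).le.trans (Nat.one_le_pow _ _ hq))
      by_contra hx0
      exact hroot x (by simpa using hx0) (mem_filter.mp hx).2
    obtain ⟨v, hv, hvroot⟩ := hroot
    obtain ⟨e, he, hfactor⟩ := exists_sigmaEval_mul_left_eq_sigmaEval_sub_self σ htop hv hvroot
    calc #{x | sigmaEval σ c (d + 1) x = 0}
        = #{x | sigmaEval σ c (d + 1) (v * x) = 0} := (card_filter_mul_left _ hv).symm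
      _ = #{x | sigmaEval σ e d (σ x - x) = 0} := by simp_rw [hfactor]
      _ ≤ #{y | sigmaEval σ e d y = 0} * #{x | σ x - x = 0} := by
          simpa using (σ.toAddMonoidHom - AddMonoidHom.id F).card_filter_mem_le
            {y | sigmaEval σ e d y = 0}
      _ ≤ q ^ d * q :=
          Nat.mul_le_mul (ih e ⟨d, le_rfl, he⟩) (by simpa only [sub_eq_zero] using hfix)
      _ = q ^ (d + 1) := (pow_succ q d).symm

lemma coeff_eq_zero_of_sigmaEval_eq_zero_on {q : ℕ} (hfix : #{x | σ x = x} ≤ q) {d : ℕ}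
    {S : Finset F} (hS : q ^ d < #S) {c : ℕ → F} (hc : ∀ x ∈ S, sigmaEval σ c d x = 0)
    {u : ℕ} (hu : u ≤ d) : c u = 0 := by
  by_contra hcu
  have hsub : S ⊆ ({x | sigmaEval σ c d x = 0} : Finset F) := fun x hx =>
    mem_filter.mpr ⟨mem_univ x, hc x hx⟩
  exact ((card_le_card hsub).trans (card_sigmaEval_eq_zero_le σ hfix d c ⟨u, hu, hcu⟩)).not_gt hS

/-- `σ^(k-t)` applied to a σ-polynomial of σ-degree `t` has σ-degree `k` and leading coefficient
`σ^(k-t) (a t)`. -/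
lemma coeff_eq_zero_of_sigma_pow_comp {q k t : ℕ} (hfix : #{x | σ x = x} ≤ q) {S : Finset F}
    (hS : q ^ k < #S) (ht : t < k) {a b : ℕ → F} (ha : ∀ i, t < i → i < k → a i = 0)
    (hb : ∀ x ∈ S, (σ ^ (k - t)) (∑ i ∈ range k, a i * (σ ^ i) x) =
      ∑ i ∈ range k, b i * (σ ^ i) x) :
    a t = 0 := by
  set j := k - t
  have hjt : j + (t + 1) = k + 1 := by omega
  set shifted : ℕ → F := fun u => if j ≤ u then (σ ^ j) (a (u - j)) else 0
  have hleft : ∀ x, (σ ^ j) (∑ i ∈ range k, a i * (σ ^ i) x) =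
      ∑ u ∈ range (k + 1), shifted u * (σ ^ u) x := by
    intro x
    rw [sigma_pow_apply_sum_mul_sigma_pow, ← hjt, sum_range_add,
      sum_eq_zero (s := range j) fun u hu => by simp [shifted, not_le.mpr (mem_range.mp hu)],
      zero_add]
    refine (sum_subset (range_subset_range.mpr ht) fun i hik hit => ?_).symm.trans
      (sum_congr rfl fun i _ => by simp [shifted])
    rw [ha i (by simpa using hit) (mem_range.mp hik), map_zero, zero_mul]
  have hright : ∀ x, ∑ i ∈ range k, b i * (σ ^ i) x =
      ∑ u ∈ range (k + 1), Function.update b k 0 u * (σ ^ u) x := by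
    intro x
    rw [sum_range_succ, Function.update_self, zero_mul, add_zero]
    exact sum_congr rfl fun i hi => by rw [Function.update_of_ne (mem_range.mp hi).ne]
  have hvanish : ∀ x ∈ S, sigmaEval σ (shifted - Function.update b k 0) k x = 0 := by
    intro x hx
    simp only [sigmaEval, Pi.sub_apply, sub_mul, sum_sub_distrib, ← hleft, ← hright, hb x hx,
      sub_self]
  have htop := coeff_eq_zero_of_sigmaEval_eq_zero_on σ hfix hS hvanish le_rfl
  have hjk : j ≤ k := Nat.sub_le k t
  have hkj : k - j = t := Nat.sub_sub_self ht.le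
  simp only [Pi.sub_apply, Function.update_self, sub_zero, shifted, if_pos hjk, hkj] at htop
  exact (map_eq_zero _).mp htop

theorem exists_eq_mul_of_forall_sigma_pow_comp {q k : ℕ} (hfix : #{x | σ x = x} ≤ q)
    (hk : 0 < k) {S : Finset F} (hS : q ^ k < #S) (φ : F → F)
    (hcomp : ∀ j < k, ∃ b : ℕ → F, ∀ x ∈ S, (σ ^ j) (φ x) = ∑ i ∈ range k, b i * (σ ^ i) x) :
    ∃ b, ∀ x ∈ S, φ x = b * x := by
  obtain ⟨a, ha⟩ := hcomp 0 hk
  simp only [pow_zero, RingHom.coe_one, id_eq] at ha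
  have hhigh : ∀ i, 0 < i → i < k → a i = 0 := by
    by_contra! h
    obtain ⟨i₀, hi₀⟩ : ({i ∈ Ioo 0 k | a i ≠ 0}).Nonempty := by
      obtain ⟨i, hi0, hik, hai⟩ := h
      exact ⟨i, by simp [hi0, hik, hai]⟩
    set t := ({i ∈ Ioo 0 k | a i ≠ 0}).max' ⟨i₀, hi₀⟩ with ht
    have htmem := max'_mem _ ⟨i₀, hi₀⟩
    rw [← ht, mem_filter, mem_Ioo] at htmem
    obtain ⟨b, hb⟩ := hcomp (k - t) (by omega)
    refine htmem.2 (coeff_eq_zero_of_sigma_pow_comp σ hfix hS htmem.1.2 (fun i hti hik => ?_)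
      fun x hx => (congrArg _ (ha x hx)).symm.trans (hb x hx))
    by_contra hai
    exact (le_max' _ i (by simp [hik, hai, htmem.1.1.trans hti])).not_gt (ht ▸ hti)
  refine ⟨a 0, fun x hx => ?_⟩
  rw [ha x hx, sum_eq_single_of_mem 0 (mem_range.mpr hk) fun i hi hi0 =>
    by rw [hhigh i (Nat.pos_of_ne_zero hi0) (mem_range.mp hi), zero_mul]]
  simp

end SigmaEval

section Frobenius

variable (K F : Type*) [Field K] [Fintype K] [Field F] [Algebra K F]

lemma frobeniusAlgHom_toRingHom_pow_apply (t : ℕ) (x : F) :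
    ((FiniteField.frobeniusAlgHom K F).toRingHom ^ t) x = x ^ Fintype.card K ^ t := by
  rw [RingHom.coe_pow]
  exact congr_fun (pow_iterate _ t) x

/-- Since `x ↦ x ^ q` has order `[F : K]`, a power `s` coprime to `[F : K]` generates the same
cyclic group, so its fixed points are those of `x ↦ x ^ q`: the roots of `X ^ q - X`. -/
lemma card_fixedPoints_frobenius_pow_le [Fintype F] [DecidableEq F] {s : ℕ}
    (hs : Nat.gcd s (Module.finrank K F) = 1) :
    #{x : F | ((FiniteField.frobeniusAlgHom K F).toRingHom ^ s) x = x} ≤ Fintype.card K := by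
  have hq : 1 < Fintype.card K := Fintype.one_lt_card
  have hfix : ∀ x : F, ((FiniteField.frobeniusAlgHom K F).toRingHom ^ s) x = x →
      x ^ Fintype.card K = x := by
    intro x hx
    rw [frobeniusAlgHom_toRingHom_pow_apply] at hx
    have hper_s : Function.IsPeriodicPt (· ^ Fintype.card K) s x := by
      rwa [Function.IsPeriodicPt, Function.IsFixedPt, pow_iterate]
    have hper_n : Function.IsPeriodicPt (· ^ Fintype.card K) (Module.finrank K F) x := by
      rw [Function.IsPeriodicPt, Function.IsFixedPt, pow_iterate, ← Module.card_eq_pow_finrank]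
      exact FiniteField.pow_card x
    simpa [hs, Function.IsPeriodicPt, Function.IsFixedPt] using hper_s.gcd hper_n
  calc _ ≤ (X ^ Fintype.card K - X : F[X]).natDegree :=
        card_le_degree_of_subset_roots fun x hx => by
          rw [mem_roots (FiniteField.X_pow_card_sub_X_ne_zero F hq)]
          simp [hfix x (mem_filter.mp hx).2]
    _ = Fintype.card K := FiniteField.X_pow_card_sub_X_natDegree_eq F hq

end Frobenius

lemma X_pow_mem_Gks {F : Type*} [Field F] {q k s j : ℕ} (hj : j < k) :
    (X ^ q ^ (s * j) : F[X]) ∈ Gks q k s F := by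
  refine ⟨Pi.single ⟨j, hj⟩ 1, ?_⟩
  rw [sum_eq_single_of_mem ⟨j, hj⟩ (mem_univ _) fun i _ hij => by simp [hij]]
  simp

lemma exists_eval_eq_of_mem_Gks {F : Type*} [Field F] {q k s : ℕ} {f : F[X]}
    (hf : f ∈ Gks q k s F) :
    ∃ b : ℕ → F, ∀ x, f.eval x = ∑ i ∈ range k, b i * x ^ q ^ (s * i) := by
  obtain ⟨a, rfl⟩ := hf
  refine ⟨fun i => if h : i < k then a ⟨i, h⟩ else 0, fun x => ?_⟩
  rw [eval_finsetSum, ← Fin.sum_univ_eq_sum_range]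
  simp

theorem psi_is_scalar_on_W_general
    (K F : Type*) [Field K] [Fintype K] [Field F] [Fintype F] [Algebra K F]
    (q k s m n : ℕ) (hq : q = Fintype.card K) (hn : Module.finrank K F = n)
    (hgcd : Nat.gcd s n = 1) (hk : 0 < k) (hkm : k < m)
    (W : Submodule K F) (hW : Module.finrank K W = m)
    (ψ : Polynomial F)
    (hcomp : ∀ f ∈ Gks q k s F, ∃ g ∈ Gks q k s F,
      ∀ x ∈ W, f.eval (ψ.eval x) = g.eval x) :
    ∃ b : F, ∀ x ∈ W, ψ.eval x = b * x := by
  classical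
  subst hq hn hW
  set σ := (FiniteField.frobeniusAlgHom K F).toRingHom ^ s
  have hσ : ∀ i x, (σ ^ i) x = x ^ Fintype.card K ^ (s * i) := fun i x => by
    rw [← pow_mul, frobeniusAlgHom_toRingHom_pow_apply]
  have hcardW : Fintype.card K ^ k < #(W : Set F).toFinset := by
    calc Fintype.card K ^ k < Fintype.card K ^ Module.finrank K W :=
          Nat.pow_lt_pow_right Fintype.one_lt_card hkm
      _ = Fintype.card W := (Module.card_eq_pow_finrank (K := K) (V := W)).symm
      _ = #(W : Set F).toFinset := by simp [Set.toFinset_card]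
  have hpow : ∀ j < k, ∃ c : ℕ → F, ∀ x ∈ (W : Set F).toFinset,
      (σ ^ j) (ψ.eval x) = ∑ i ∈ range k, c i * (σ ^ i) x := by
    intro j hj
    obtain ⟨g, hg, hψg⟩ := hcomp _ (X_pow_mem_Gks hj)
    obtain ⟨c, hc⟩ := exists_eval_eq_of_mem_Gks hg
    exact ⟨c, fun x hx => by simpa [hσ, hc] using hψg x (Set.mem_toFinset.mp hx)⟩
  obtain ⟨b, hb⟩ := exists_eq_mul_of_forall_sigma_pow_comp σ
    (card_fixedPoints_frobenius_pow_le K F hgcd) hk hcardW ψ.eval hpow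
  exact ⟨b, fun x hx => hb x (Set.mem_toFinset.mpr hx)⟩

/-- If `ψ ∈ L_{F/K}` satisfies `π_W(f ∘ ψ) ∈ π_W(G_{k,s})` for every `f ∈ G_{k,s}`
(where `W` is an `m`-dimensional `K`-subspace of `F`), then `ψ ≡ bX (mod θ_W)` for
some `b ∈ F`, i.e. `ψ(x) = bx` for all `x ∈ W`. -/
theorem psi_is_scalar_on_W
    (K F : Type*) [Field K] [Fintype K] [Field F] [Fintype F] [Algebra K F]
    (q k s m n : ℕ) (hq : q = Fintype.card K) (hn : Module.finrank K F = n)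
    (hs : 0 < s) (hgcd : Nat.gcd s n = 1) (hk : 0 < k) (hkm : k < m) (hmn : m ≤ n)
    (W : Submodule K F) (hW : Module.finrank K W = m)
    (ψ : Polynomial F) (hψ : ψ ∈ linearizedPolys q F)
    (hcomp : ∀ f ∈ Gks q k s F, ∃ g ∈ Gks q k s F,
      ∀ x ∈ W, f.eval (ψ.eval x) = g.eval x) :
    ∃ b : F, ∀ x ∈ W, ψ.eval x = b * x :=
  psi_is_scalar_on_W_general K F q k s m n hq hn hgcd hk hkm W hW ψ hcomp
end

section
/- Let k, s, n be positive integers with gcd(n,s) = 1 and k < n − 1. Then for all (n−1)-dimensional K-subspaces U and W of F, the projected Gabidulin codes π_U(G_{k,s}) and π_W(G_{k,s}) in K^{(n−1)×n} are equivalent. -/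
/-!
Any two hyperplanes `U`, `W` of `F` differ by a nonzero scalar: counting dimensions, the map
`c ↦ (x ↦ c x mod W)` from `F` to `Hom_K(U, F/W)` has a nonzero kernel element `c`, and then
`c U = W`. Substituting `c X` for `X` maps `G_{k,s}` onto itself, so `π_U` and `π_{cU}`
coincide; and since every element of `G_{k,s}` is `K`-linear, changing the basis of `W`
multiplies the code on the left by the invertible transition matrix.
-/

/-- Code equivalence of rank-metric codes in `K^{m×n}`. -/
def codeEquiv {K : Type*} [Field K] {m n : ℕ}
    (C1 C2 : Set (Matrix (Fin m) (Fin n) K)) : Prop :=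
  ∃ (A : Matrix (Fin m) (Fin m) K) (B : Matrix (Fin n) (Fin n) K)
    (C : Matrix (Fin m) (Fin n) K) (ρ : K ≃+* K), IsUnit A ∧ IsUnit B ∧
      (C2 = (fun X => A * X.map ρ * B + C) '' C1 ∨
        ∃ h : m = n,
          C2 = (fun X => A * ((X.transpose.submatrix (finCongr h) (finCongr h.symm)).map ρ)
            * B + C) '' C1)

/-- The projected Gabidulin code `π_U(G_{k,s})` in `K^{m×n}` obtained from a basis
`α : Fin m → F` of the `m`-dimensional `K`-subspace `U` of `F` and a coordinate
isomorphism `v : F ≃ K^n`. -/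
def gabCode {K F : Type*} [Field K] [Field F] [Algebra K F] (q k s m n : ℕ)
    (α : Fin m → F) (v : F ≃ₗ[K] (Fin n → K)) : Set (Matrix (Fin m) (Fin n) K) :=
  {M | ∃ p ∈ Gks q k s F, M = Matrix.of fun i j => v (p.eval (α i)) j}

open Polynomial

theorem Matrix.mul_of_linearMap {K M ι ι' κ : Type*} [CommSemiring K] [AddCommMonoid M]
    [Module K M]
    [Fintype ι'] (f : M →ₗ[K] κ → K) (A : Matrix ι ι' K) (α : ι' → M) :
    A * Matrix.of (fun l j => f (α l) j) = Matrix.of fun i j => f (∑ l, A i l • α l) j := by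
  ext i j
  simp [Matrix.mul_apply, Finset.sum_apply]

theorem LinearIndependent.exists_isUnit_matrix_of_span_eq {K M ι : Type*} [CommRing K]
    [AddCommGroup M] [Module K M] [Fintype ι] [DecidableEq ι] {α β : ι → M}
    (hα : LinearIndependent K α) (hβ : LinearIndependent K β)
    (h : Submodule.span K (Set.range β) = Submodule.span K (Set.range α)) :
    ∃ A : Matrix ι ι K, IsUnit A ∧ ∀ i, β i = ∑ j, A i j • α j := by
  let bα := Module.Basis.span hα
  let bβ := (Module.Basis.span hβ).map (LinearEquiv.ofEq _ _ h)
  refine ⟨(bα.toMatrix bβ).transpose, ?_, fun i => ?_⟩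
  · have := bα.invertibleToMatrix bβ
    exact (Matrix.isUnit_transpose _).mpr (isUnit_of_invertible _)
  · have := congrArg Subtype.val (bα.sum_toMatrix_smul_self bβ (j := i))
    simpa [bα, bβ] using this.symm

section Hyperplane

variable {K F : Type*} [Field K] [Field F] [Algebra K F] [FiniteDimensional K F]

theorem Submodule.exists_ne_zero_map_mulLeft_le {U W : Submodule K F}
    (h : Module.finrank K U * Module.finrank K (F ⧸ W) < Module.finrank K F) :
    ∃ c : F, c ≠ 0 ∧ U.map (LinearMap.mulLeft K c) ≤ W := by
  let Φ : F →ₗ[K] U →ₗ[K] F ⧸ W := LinearMap.mk₂ K (fun c x => W.mkQ (c * x))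
    (fun _ _ _ => by simp [add_mul]) (fun _ _ _ => by simp)
    (fun _ _ _ => by simp [mul_add]) (fun _ _ _ => by simp)
  have hker : LinearMap.ker Φ ≠ ⊥ := LinearMap.ker_ne_bot_of_finrank_lt <| by
    rwa [Module.finrank_linearMap]
  obtain ⟨c, hcΦ, hc⟩ := (Submodule.ne_bot_iff _).mp hker
  refine ⟨c, hc, ?_⟩
  rintro _ ⟨x, hx, rfl⟩
  simpa [Φ, Submodule.Quotient.mk_eq_zero] using LinearMap.congr_fun hcΦ ⟨x, hx⟩

theorem Submodule.exists_ne_zero_map_mulLeft_eq {U W : Submodule K F}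
    (hU : Module.finrank K U = Module.finrank K F - 1)
    (hW : Module.finrank K W = Module.finrank K F - 1) :
    ∃ c : F, c ≠ 0 ∧ U.map (LinearMap.mulLeft K c) = W := by
  have hpos := Module.finrank_pos (R := K) (M := F)
  have hquot : Module.finrank K (F ⧸ W) = 1 := by
    have := W.finrank_quotient_add_finrank
    omega
  obtain ⟨c, hc, hle⟩ := exists_ne_zero_map_mulLeft_le (by
    rw [hquot, hU]
    omega)
  refine ⟨c, hc, Submodule.eq_of_le_of_finrank_eq hle ?_⟩
  rw [← (U.equivMapOfInjective _ (mul_right_injective₀ hc)).finrank_eq, hU, hW]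

end Hyperplane

theorem isLinearMap_eval_of_mem_Gks {K F : Type*} [Field K] [Fintype K] [Field F] [Algebra K F]
    {q k s : ℕ} (hq : q = Fintype.card K) {p : F[X]}
    (hp : p ∈ Gks q k s F) : IsLinearMap K fun x => p.eval x := by
  obtain ⟨a, rfl⟩ := hp
  subst hq
  let f : F →ₗ[K] F := ∑ t : Fin k,
    LinearMap.mulLeft K (a t) ∘ₗ (FiniteField.frobeniusAlgHom K F ^ (s * (t : ℕ))).toLinearMap
  convert f.isLinear using 1
  ext x
  simp [f, eval_finsetSum, FiniteField.coe_frobeniusAlgHom, pow_iterate]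

theorem Gks.exists_eval_mul {q k s : ℕ} {F : Type*} [Field F] (c : F) {p : F[X]}
    (hp : p ∈ Gks q k s F) : ∃ p' ∈ Gks q k s F, ∀ x, p'.eval x = p.eval (c * x) := by
  obtain ⟨a, rfl⟩ := hp
  refine ⟨_, ⟨fun t => a t * c ^ q ^ (s * (t : ℕ)), rfl⟩, fun x => ?_⟩
  simp only [eval_finsetSum, eval_mul, eval_C, eval_pow, eval_X, mul_pow, mul_assoc]

theorem gabCode_mul_left {K F : Type*} [Field K] [Field F] [Algebra K F] {q k s m n : ℕ}
    {c : F} (hc : c ≠ 0) (α : Fin m → F) (v : F ≃ₗ[K] (Fin n → K)) :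
    gabCode q k s m n (fun i => c * α i) v = gabCode q k s m n α v := by
  ext M
  constructor
  · rintro ⟨p, hp, rfl⟩
    obtain ⟨p', hp', hp'_eval⟩ := Gks.exists_eval_mul c hp
    exact ⟨p', hp', by simp only [hp'_eval]⟩
  · rintro ⟨p, hp, rfl⟩
    obtain ⟨p', hp', hp'_eval⟩ := Gks.exists_eval_mul c⁻¹ hp
    exact ⟨p', hp', by simp only [hp'_eval, inv_mul_cancel_left₀ hc]⟩

theorem gabCode_eq_image_mul {K F : Type*} [Field K] [Fintype K] [Field F] [Algebra K F]
    {q k s m n : ℕ} (hq : q = Fintype.card K) {α β : Fin m → F} (A : Matrix (Fin m) (Fin m) K)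
    (hβ : ∀ i, β i = ∑ l, A i l • α l) (v : F ≃ₗ[K] (Fin n → K)) :
    gabCode q k s m n β v = (A * ·) '' gabCode q k s m n α v := by
  have key : ∀ p ∈ Gks q k s F,
      A * Matrix.of (fun i j => v (p.eval (α i)) j) = Matrix.of fun i j => v (p.eval (β i)) j := by
    intro p hp
    simp only [hβ]
    exact Matrix.mul_of_linearMap (v.toLinearMap ∘ₗ (isLinearMap_eval_of_mem_Gks hq hp).mk') A α
  ext M
  constructor
  · rintro ⟨p, hp, rfl⟩
    exact ⟨_, ⟨p, hp, rfl⟩, key p hp⟩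
  · rintro ⟨_, ⟨p, hp, rfl⟩, rfl⟩
    exact ⟨p, hp, key p hp⟩

theorem codeEquiv_of_eq_image_mul {K : Type*} [Field K] {m n : ℕ}
    {C₁ C₂ : Set (Matrix (Fin m) (Fin n) K)} {A : Matrix (Fin m) (Fin m) K} (hA : IsUnit A)
    (h : C₂ = (A * ·) '' C₁) : codeEquiv C₁ C₂ := by
  refine ⟨A, 1, 0, RingEquiv.refl K, hA, isUnit_one, Or.inl ?_⟩
  simp [h]

theorem hyperplane_projections_all_equivalent_general
    (K F : Type*) [Field K] [Fintype K] [Field F] [Algebra K F]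
    (q k s n : ℕ) (hq : q = Fintype.card K) (hn : Module.finrank K F = n)
    (hkn : k < n - 1)
    (U W : Submodule K F)
    (hU : Module.finrank K U = n - 1) (hW : Module.finrank K W = n - 1)
    (αU αW : Fin (n - 1) → F)
    (hαU : LinearIndependent K αU) (hαUspan : Submodule.span K (Set.range αU) = U)
    (hαW : LinearIndependent K αW) (hαWspan : Submodule.span K (Set.range αW) = W)
    (v : F ≃ₗ[K] (Fin n → K)) :
    codeEquiv (gabCode q k s (n - 1) n αU v) (gabCode q k s (n - 1) n αW v) := by
  have : FiniteDimensional K F := Module.finite_of_finrank_pos (by omega)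
  obtain ⟨c, hc, hcU⟩ := Submodule.exists_ne_zero_map_mulLeft_eq (hn ▸ hU) (hn ▸ hW)
  have hcα_span : Submodule.span K (Set.range fun i => c * αU i) = W := by
    rw [← hcU, ← hαUspan, Submodule.map_span, ← Set.range_comp]
    rfl
  have hcα : LinearIndependent K fun i => c * αU i :=
    hαU.map' (LinearMap.mulLeft K c) (LinearMap.ker_eq_bot.mpr (mul_right_injective₀ hc))
  obtain ⟨A, hA, hαW_eq⟩ :=
    hcα.exists_isUnit_matrix_of_span_eq hαW (hαWspan.trans hcα_span.symm)
  refine codeEquiv_of_eq_image_mul hA ?_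
  rw [gabCode_eq_image_mul hq A hαW_eq, gabCode_mul_left hc]

/-- For `gcd(n,s) = 1` and `k < n - 1`, all projections `π_U(G_{k,s})` of the
Gabidulin code to `(n-1)`-dimensional `K`-subspaces `U` of `F` are equivalent. -/
theorem hyperplane_projections_all_equivalent
    (K F : Type*) [Field K] [Fintype K] [Field F] [Algebra K F]
    (q k s n : ℕ) (hq : q = Fintype.card K) (hn : Module.finrank K F = n)
    (hs : 0 < s) (hgcd : Nat.gcd n s = 1) (hk : 0 < k) (hkn : k < n - 1)
    (U W : Submodule K F)
    (hU : Module.finrank K U = n - 1) (hW : Module.finrank K W = n - 1)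
    (αU αW : Fin (n - 1) → F)
    (hαU : LinearIndependent K αU) (hαUspan : Submodule.span K (Set.range αU) = U)
    (hαW : LinearIndependent K αW) (hαWspan : Submodule.span K (Set.range αW) = W)
    (v : F ≃ₗ[K] (Fin n → K)) :
    codeEquiv (gabCode q k s (n - 1) n αU v) (gabCode q k s (n - 1) n αW v) :=
  hyperplane_projections_all_equivalent_general K F q k s n hq hn hkn U W hU hW αU αW hαU hαUspan
    hαW hαWspan v
end

section
/- Let U and W be arbitrary (n−1)-dimensional K-subspaces of F. Then there exists a ∈ F^* such that W = aU = {au : u ∈ U}. -/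
/-! A hyperplane of `F` is the kernel of a nonzero `K`-linear form `φ`. For `φ ≠ 0` the map
`a ↦ (x ↦ φ (a * x))` from `F` to its `K`-dual is injective (`φ (a * (a⁻¹ * x)) = φ x`), hence
bijective by counting dimensions, so every other hyperplane is `ker (x ↦ φ (a * x)) = a⁻¹ • ker φ`. -/

open Module

theorem Submodule.exists_dual_ne_zero_ker_eq {K V : Type*} [Field K] [AddCommGroup V]
    [Module K V] [FiniteDimensional K V] (U : Submodule K V)
    (hU : finrank K U + 1 = finrank K V) :
    ∃ φ : Dual K V, φ ≠ 0 ∧ LinearMap.ker φ = U := by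
  have hquot : finrank K (V ⧸ U) = finrank K K := by
    have := U.finrank_quotient_add_finrank
    rw [finrank_self]
    omega
  obtain ⟨e⟩ := FiniteDimensional.nonempty_linearEquiv_of_finrank_eq hquot
  refine ⟨e.toLinearMap ∘ₗ U.mkQ, fun h => ?_, by rw [LinearEquiv.ker_comp, U.ker_mkQ]⟩
  obtain ⟨x, hx⟩ := (e.surjective.comp U.mkQ_surjective) 1
  exact one_ne_zero (hx.symm.trans (LinearMap.congr_fun h x))

theorem Module.Dual.exists_eq_comp_mulLeft {K F : Type*} [Field K] [DivisionRing F]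
    [Algebra K F] [FiniteDimensional K F] {φ : Dual K F} (hφ : φ ≠ 0) (ψ : Dual K F) :
    ∃ a : F, ψ = φ ∘ₗ LinearMap.mulLeft K a := by
  let L : F →ₗ[K] Dual K F := (LinearMap.mul K F).compr₂ φ
  have hL : Function.Injective L := by
    refine (injective_iff_map_eq_zero L).2 fun a ha => by_contra fun ha0 => hφ ?_
    ext x
    simpa [L, mul_inv_cancel_left₀ ha0] using LinearMap.congr_fun ha (a⁻¹ * x)
  obtain ⟨a, rfl⟩ := (LinearMap.injective_iff_surjective_of_finrank_eq_finrank
    Subspace.dual_finrank_eq.symm).1 hL ψ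
  exact ⟨a, rfl⟩

theorem hyperplanes_are_multiples_general
    (K F : Type*) [Field K] [Field F] [Algebra K F]
    (n : ℕ) (hn : Module.finrank K F = n) (hnpos : 0 < n)
    (U W : Submodule K F)
    (hU : Module.finrank K U = n - 1) (hW : Module.finrank K W = n - 1) :
    ∃ a : F, a ≠ 0 ∧ (W : Set F) = (fun u => a * u) '' (U : Set F) := by
  have : FiniteDimensional K F := Module.finite_of_finrank_pos (hn ▸ hnpos)
  obtain ⟨φ, hφ, rfl⟩ := U.exists_dual_ne_zero_ker_eq (by omega)
  obtain ⟨ψ, hψ, rfl⟩ := W.exists_dual_ne_zero_ker_eq (by omega)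
  obtain ⟨a, rfl⟩ := Dual.exists_eq_comp_mulLeft hφ ψ
  have ha : a ≠ 0 := by rintro rfl; exact hψ (by ext; simp)
  refine ⟨a⁻¹, inv_ne_zero ha, ?_⟩
  rw [LinearMap.ker_comp, Submodule.comap_coe]
  exact Set.preimage_smul₀ ha _

/-- For arbitrary `(n-1)`-dimensional `K`-subspaces `U` and `W` of `F` (where
`F/K` is a degree-`n` extension of finite fields), there exists `a ∈ F^*` such that
`W = aU = {au : u ∈ U}`. -/
theorem hyperplanes_are_multiples
    (K F : Type*) [Field K] [Fintype K] [Field F] [Algebra K F]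
    (n : ℕ) (hn : Module.finrank K F = n) (hnpos : 0 < n)
    (U W : Submodule K F)
    (hU : Module.finrank K U = n - 1) (hW : Module.finrank K W = n - 1) :
    ∃ a : F, a ≠ 0 ∧ (W : Set F) = (fun u => a * u) '' (U : Set F) :=
  hyperplanes_are_multiples_general K F n hn hnpos U W hU hW
end

section
/- Let k, s, m, n be positive integers with gcd(s,n) = 1 and 1 ≤ k ≤ m ≤ n, and let U be an m-dimensional K-subspace of F with basis {α_1, ..., α_m}. Then the projected Gabidulin code π_U(G_{k,s}) ⊆ K^{m×n} has exactly q^{nk} elements and minimum rank distance m − k + 1; in particular, it is an MRD code. -/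
open Polynomial Module Submodule FiniteField

section FinrankKer

variable {K V W Z : Type*} [Field K] [AddCommGroup V] [Module K V] [AddCommGroup W] [Module K W]
  [AddCommGroup Z] [Module K Z]

theorem Submodule.finrank_map_add_finrank_inf_ker [FiniteDimensional K V] (f : V →ₗ[K] W)
    (U : Submodule K V) : finrank K (U.map f) + finrank K ↥(U ⊓ LinearMap.ker f) = finrank K U := by
  have h := (f.domRestrict U).finrank_range_add_finrank_ker
  rwa [LinearMap.range_domRestrict, LinearMap.ker_domRestrict, ← U.finrank_map_subtype_eq,
    map_comap_subtype] at h

theorem LinearMap.finrank_ker_comp_le [FiniteDimensional K V] [FiniteDimensional K W]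
    (f : W →ₗ[K] Z) (g : V →ₗ[K] W) :
    finrank K (ker (f ∘ₗ g)) ≤ finrank K (ker f) + finrank K (ker g) := by
  have h := (ker (f ∘ₗ g)).finrank_map_add_finrank_inf_ker g
  have hmap : (ker (f ∘ₗ g)).map g ≤ ker f := by
    rw [ker_comp]; exact map_comap_le g _
  rw [inf_eq_right.mpr (ker_le_ker_comp g f)] at h
  have := Submodule.finrank_mono hmap
  omega

theorem LinearMap.finrank_ker_comp_linearEquiv (f : W →ₗ[K] Z) (e : V ≃ₗ[K] W) :
    finrank K (ker (f ∘ₗ e.toLinearMap)) = finrank K (ker f) := by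
  rw [ker_comp, comap_equiv_eq_map_symm, LinearEquiv.finrank_map_eq]

end FinrankKer

namespace AlgEquiv

variable {K F : Type*} [Field K] [Field F] [Algebra K F] (τ : F ≃ₐ[K] F)

/-- The `K`-linear map `x ↦ ∑ aᵢ τⁱ x` attached to `∑ aᵢ Xⁱ`. -/
noncomputable def linearizedMap : F[X] →ₗ[F] (F →ₗ[K] F) :=
  lsum fun i => LinearMap.toSpanSingleton F (F →ₗ[K] F) (τ ^ i).toLinearMap

theorem linearizedMap_monomial (i : ℕ) (a : F) :
    τ.linearizedMap (monomial i a) = a • (τ ^ i).toLinearMap := by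
  simp [linearizedMap, sum_monomial_index]

theorem linearizedMap_apply (P : F[X]) (x : F) :
    τ.linearizedMap P x = P.sum fun i a => a * (τ ^ i) x := by
  simp [linearizedMap, Polynomial.sum_def, LinearMap.sum_apply]

theorem linearizedMap_mul_X (P : F[X]) :
    τ.linearizedMap (P * X) = τ.linearizedMap P ∘ₗ τ.toLinearMap := by
  induction P using Polynomial.induction_on' with
  | add P Q hP hQ => rw [add_mul, map_add, map_add, hP, hQ, LinearMap.add_comp]
  | monomial i a =>
    rw [monomial_mul_X, linearizedMap_monomial, linearizedMap_monomial]
    ext x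
    simp [pow_succ, AlgEquiv.mul_apply]

theorem linearizedMap_mul_X_sub_one (P : F[X]) :
    τ.linearizedMap (P * (X - 1)) = τ.linearizedMap P ∘ₗ (τ.toLinearMap - LinearMap.id) := by
  rw [mul_sub, mul_one, map_sub, linearizedMap_mul_X, LinearMap.comp_sub, LinearMap.comp_id]

/-- `P * u` in the skew polynomial ring `F[X; τ]`, where `X * u = τ u * X`. -/
noncomputable def skewMulRight (P : F[X]) (u : F) : F[X] :=
  P.sum fun i a => monomial i (a * (τ ^ i) u)

theorem coeff_skewMulRight (P : F[X]) (u : F) (i : ℕ) :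
    (τ.skewMulRight P u).coeff i = P.coeff i * (τ ^ i) u := by
  simp only [skewMulRight, Polynomial.sum_def, finsetSum_coeff, coeff_monomial]
  rw [Finset.sum_ite_eq']
  split_ifs with h
  · rfl
  · rw [notMem_support_iff.mp h, zero_mul]

theorem linearizedMap_skewMulRight (P : F[X]) (u x : F) :
    τ.linearizedMap (τ.skewMulRight P u) x = τ.linearizedMap P (u * x) := by
  simp [skewMulRight, Polynomial.sum_def, linearizedMap_monomial, LinearMap.sum_apply,
    linearizedMap_apply, mul_assoc]

theorem eval_one_skewMulRight (P : F[X]) (u : F) :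
    (τ.skewMulRight P u).eval 1 = τ.linearizedMap P u := by
  simp [skewMulRight, Polynomial.sum_def, eval_finsetSum, linearizedMap_apply]

theorem natDegree_skewMulRight_le (P : F[X]) (u : F) :
    (τ.skewMulRight P u).natDegree ≤ P.natDegree :=
  natDegree_le_iff_coeff_eq_zero.mpr fun i hi => by
    rw [coeff_skewMulRight, coeff_eq_zero_of_natDegree_lt hi, zero_mul]

theorem skewMulRight_ne_zero {P : F[X]} (hP : P ≠ 0) {u : F} (hu : u ≠ 0) :
    τ.skewMulRight P u ≠ 0 := by
  refine fun h => mul_ne_zero (leadingCoeff_ne_zero.mpr hP)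
    ((map_ne_zero_iff _ (τ ^ P.natDegree).injective).mpr hu) ?_
  rw [leadingCoeff, ← coeff_skewMulRight, h, coeff_zero]

variable {τ}

theorem finrank_ker_toLinearMap_sub_id_le_one
    (hτ : ∀ x, τ x = x → x ∈ Set.range (algebraMap K F)) :
    finrank K (LinearMap.ker (τ.toLinearMap - LinearMap.id)) ≤ 1 := by
  have hle : LinearMap.ker (τ.toLinearMap - LinearMap.id) ≤
      LinearMap.range (Algebra.linearMap K F) := fun x hx => hτ x (sub_eq_zero.mp hx)
  calc _ ≤ finrank K (LinearMap.range (Algebra.linearMap K F)) := Submodule.finrank_mono hle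
    _ ≤ finrank K K := LinearMap.finrank_range_le _
    _ = 1 := finrank_self K

variable [FiniteDimensional K F]

theorem finrank_ker_linearizedMap_le (hτ : ∀ x, τ x = x → x ∈ Set.range (algebraMap K F))
    {P : F[X]} (hP : P ≠ 0) : finrank K (LinearMap.ker (τ.linearizedMap P)) ≤ P.natDegree := by
  induction hd : P.natDegree using Nat.strong_induction_on generalizing P with
  | _ d ih =>
  rcases eq_or_ne (LinearMap.ker (τ.linearizedMap P)) ⊥ with hbot | hne
  · rw [hbot, finrank_bot]
    exact Nat.zero_le d
  obtain ⟨u, hu, hu0⟩ := Submodule.exists_mem_ne_zero_of_ne_bot hne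
  obtain ⟨R, hR⟩ : X - C 1 ∣ τ.skewMulRight P u := by
    rw [dvd_iff_isRoot, IsRoot, eval_one_skewMulRight]
    exact hu
  rw [mul_comm] at hR
  have hR0 : R ≠ 0 := by
    rintro rfl
    exact τ.skewMulRight_ne_zero hP hu0 (by rw [hR, zero_mul])
  have hRdeg : R.natDegree + 1 ≤ d := by
    have := τ.natDegree_skewMulRight_le P u
    rw [hR, natDegree_mul hR0 (X_sub_C_ne_zero 1), natDegree_X_sub_C] at this
    omega
  let e : F ≃ₗ[K] F := DistribMulAction.toLinearEquiv K F (Units.mk0 u hu0)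
  have hcomp : τ.linearizedMap P ∘ₗ e.toLinearMap =
      τ.linearizedMap R ∘ₗ (τ.toLinearMap - LinearMap.id) := by
    rw [← linearizedMap_mul_X_sub_one, ← C_1, ← hR]
    ext x
    exact (linearizedMap_skewMulRight τ P u x).symm
  calc finrank K (LinearMap.ker (τ.linearizedMap P))
      = finrank K (LinearMap.ker (τ.linearizedMap R ∘ₗ (τ.toLinearMap - LinearMap.id))) := by
        rw [← hcomp, LinearMap.finrank_ker_comp_linearEquiv]
    _ ≤ finrank K (LinearMap.ker (τ.linearizedMap R)) +
          finrank K (LinearMap.ker (τ.toLinearMap - LinearMap.id)) :=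
        LinearMap.finrank_ker_comp_le _ _
    _ ≤ R.natDegree + 1 :=
        add_le_add (ih _ (by omega) hR0 rfl) (finrank_ker_toLinearMap_sub_id_le_one hτ)
    _ ≤ d := hRdeg

end AlgEquiv

namespace FiniteField

variable (K : Type*) {F : Type*} [Field K] [Fintype K] [Field F] [Algebra K F]

theorem frobeniusAlgEquivOfAlgebraic_pow_apply [Algebra.IsAlgebraic K F] (t : ℕ) (x : F) :
    (frobeniusAlgEquivOfAlgebraic K F ^ t) x = x ^ Fintype.card K ^ t := by
  rw [AlgEquiv.coe_pow, coe_frobeniusAlgEquivOfAlgebraic_iterate]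

variable {K} [Finite F]

theorem mem_range_algebraMap_of_frobenius_pow_apply_eq {s : ℕ} (hs : s.Coprime (finrank K F))
    {x : F} (hx : (frobeniusAlgEquivOfAlgebraic K F ^ s) x = x) :
    x ∈ Set.range (algebraMap K F) := by
  set φ := frobeniusAlgEquivOfAlgebraic K F
  have hφs : φ ^ s ∈ MulAction.stabilizer Gal(F/K) x := hx
  obtain ⟨m, hm⟩ := exists_pow_eq_self_of_coprime
    (x := φ) (orderOf_frobeniusAlgEquivOfAlgebraic K F ▸ hs)
  have hφ : φ ∈ MulAction.stabilizer Gal(F/K) x := hm ▸ pow_mem hφs m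
  rw [IsGalois.mem_range_algebraMap_iff_fixed]
  intro f
  obtain ⟨i, rfl⟩ := (bijective_frobeniusAlgEquivOfAlgebraic_pow K F).2 f
  exact pow_mem hφ i

end FiniteField

section EvalMatrix

variable {K V W ι κ : Type*} [Field K] [AddCommGroup V] [Module K V] [AddCommGroup W]
  [Module K W]

def evalMatrix (α : ι → V) (v : W ≃ₗ[K] (κ → K)) (f : V →ₗ[K] W) : Matrix ι κ K :=
  Matrix.of fun i j => v (f (α i)) j

theorem evalMatrix_sub (α : ι → V) (v : W ≃ₗ[K] (κ → K)) (f g : V →ₗ[K] W) :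
    evalMatrix α v (f - g) = evalMatrix α v f - evalMatrix α v g := by
  ext i j
  simp [evalMatrix]

theorem rank_evalMatrix [Finite ι] [Fintype κ] (α : ι → V) (v : W ≃ₗ[K] (κ → K))
    (f : V →ₗ[K] W) :
    (evalMatrix α v f).rank = finrank K ((span K (Set.range α)).map f) := by
  have hrows : Set.range (evalMatrix α v f).row = (v.toLinearMap ∘ₗ f) '' Set.range α := by
    rw [← Set.range_comp]
    rfl
  rw [Matrix.rank_eq_finrank_span_row, hrows, span_image, Submodule.map_comp,
    LinearEquiv.finrank_map_eq]

end EvalMatrix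

section LinearizedCode

variable {K F κ : Type*} [Field K] [Field F] [Algebra K F] [FiniteDimensional K F] [Fintype κ]
  (v : F ≃ₗ[K] (κ → K))

theorem sub_add_one_le_rank_evalMatrix {m k : ℕ} {α : Fin m → F} (hα : LinearIndependent K α)
    {τ : F ≃ₐ[K] F} (hτ : ∀ x, τ x = x → x ∈ Set.range (algebraMap K F)) {P : F[X]}
    (hkm : k ≤ m) (hP : P ∈ degreeLT F k) (hP0 : P ≠ 0) :
    m - k + 1 ≤ (evalMatrix α v (τ.linearizedMap P)).rank := by
  have h := (span K (Set.range α)).finrank_map_add_finrank_inf_ker (τ.linearizedMap P)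
  have hker : finrank K ↥(span K (Set.range α) ⊓ LinearMap.ker (τ.linearizedMap P)) ≤
      P.natDegree :=
    (Submodule.finrank_mono inf_le_right).trans (τ.finrank_ker_linearizedMap_le hτ hP0)
  have hdeg : P.natDegree < k := (natDegree_lt_iff_degree_lt hP0).mpr (mem_degreeLT.mp hP)
  rw [finrank_span_eq_card hα, Fintype.card_fin] at h
  rw [rank_evalMatrix]
  omega

theorem exists_mem_degreeLT_rank_evalMatrix_le {m k : ℕ} {α : Fin m → F}
    (hα : LinearIndependent K α) (τ : F ≃ₐ[K] F) (hk : 0 < k) (hkm : k ≤ m) :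
    ∃ P ∈ degreeLT F k, P ≠ 0 ∧ (evalMatrix α v (τ.linearizedMap P)).rank ≤ m - (k - 1) := by
  let β : Fin (k - 1) → F := α ∘ Fin.castLE (by omega)
  let ev : degreeLT F k →ₗ[F] (Fin (k - 1) → F) :=
    LinearMap.pi fun j => LinearMap.applyₗ' F (β j) ∘ₗ τ.linearizedMap ∘ₗ (degreeLT F k).subtype
  have hev : LinearMap.ker ev ≠ ⊥ := LinearMap.ker_ne_bot_of_finrank_lt <| by
    rw [(degreeLTEquiv F k).finrank_eq, finrank_fin_fun, finrank_fin_fun]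
    omega
  obtain ⟨⟨P, hP⟩, hPker, hP0⟩ := Submodule.exists_mem_ne_zero_of_ne_bot hev
  refine ⟨P, hP, fun h => hP0 (Subtype.ext h), ?_⟩
  have hβ : span K (Set.range β) ≤ span K (Set.range α) ⊓ LinearMap.ker (τ.linearizedMap P) := by
    rw [span_le]
    rintro _ ⟨j, rfl⟩
    exact ⟨subset_span ⟨_, rfl⟩, congr_fun hPker j⟩
  have hβrank : finrank K (span K (Set.range β)) = k - 1 := by
    have hβli : LinearIndependent K β := hα.comp _ (Fin.castLE_injective _)
    rw [finrank_span_eq_card hβli, Fintype.card_fin]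
  have hαrank : finrank K (span K (Set.range α)) = m := by
    rw [finrank_span_eq_card hα, Fintype.card_fin]
  have h := (span K (Set.range α)).finrank_map_add_finrank_inf_ker (τ.linearizedMap P)
  have := Submodule.finrank_mono hβ
  rw [rank_evalMatrix]
  omega

end LinearizedCode

theorem Polynomial.natCard_degreeLT (R : Type*) [Semiring R] (k : ℕ) :
    Nat.card (degreeLT R k) = Nat.card R ^ k := by
  rw [Nat.card_congr (degreeLTEquiv R k).toEquiv, Nat.card_fun, Nat.card_fin]

section GabidulinCode

variable {K F : Type*} [Field K] [Fintype K] [Field F] [Algebra K F] [Algebra.IsAlgebraic K F]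

theorem eval_sum_C_mul_X_pow_card_pow (k s : ℕ) (a : Fin k → F) (x : F) :
    (∑ i : Fin k, C (a i) * X ^ Fintype.card K ^ (s * (i : ℕ))).eval x =
      (frobeniusAlgEquivOfAlgebraic K F ^ s).linearizedMap ((degreeLTEquiv F k).symm a) x := by
  have hsymm : ((degreeLTEquiv F k).symm a : F[X]) = ∑ i : Fin k, monomial i (a i) := rfl
  simp [hsymm, eval_finsetSum, LinearMap.sum_apply, AlgEquiv.linearizedMap_monomial, ← pow_mul,
    FiniteField.frobeniusAlgEquivOfAlgebraic_pow_apply]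

theorem gabCode_eq_image (k s m n : ℕ) (α : Fin m → F) (v : F ≃ₗ[K] (Fin n → K)) :
    gabCode (Fintype.card K) k s m n α v =
      (fun P => evalMatrix α v ((frobeniusAlgEquivOfAlgebraic K F ^ s).linearizedMap P)) ''
        degreeLT F k := by
  ext M
  constructor
  · rintro ⟨_, ⟨a, rfl⟩, rfl⟩
    refine ⟨_, ((degreeLTEquiv F k).symm a).2, ?_⟩
    ext i j
    simp [evalMatrix, eval_sum_C_mul_X_pow_card_pow]
  · rintro ⟨P, hP, rfl⟩
    refine ⟨_, ⟨degreeLTEquiv F k ⟨P, hP⟩, rfl⟩, ?_⟩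
    ext i j
    simp [evalMatrix, eval_sum_C_mul_X_pow_card_pow]

end GabidulinCode

theorem gabidulin_code_is_MRD_general
    (K F : Type*) [Field K] [Fintype K] [Field F] [Algebra K F]
    (q k s m n : ℕ) (hq : q = Fintype.card K)
    (hgcd : Nat.gcd s n = 1) (hk : 0 < k) (hkm : k ≤ m)
    (α : Fin m → F) (hα : LinearIndependent K α)
    (v : F ≃ₗ[K] (Fin n → K)) :
    Nat.card (gabCode q k s m n α v) = q ^ (n * k) ∧
    (∀ A ∈ gabCode q k s m n α v, ∀ B ∈ gabCode q k s m n α v,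
      A ≠ B → m - k + 1 ≤ (A - B).rank) ∧
    (∃ A ∈ gabCode q k s m n α v, ∃ B ∈ gabCode q k s m n α v,
      A ≠ B ∧ (A - B).rank = m - k + 1) := by
  subst hq
  have : FiniteDimensional K F := v.symm.finiteDimensional
  have : Finite F := Module.finite_of_finite K
  have hn : finrank K F = n := by simpa using v.finrank_eq
  set τ := frobeniusAlgEquivOfAlgebraic K F ^ s
  set Φ := fun P => evalMatrix α v (τ.linearizedMap P)
  have hτ : ∀ x, τ x = x → x ∈ Set.range (algebraMap K F) := fun _ =>
    mem_range_algebraMap_of_frobenius_pow_apply_eq (hn ▸ hgcd)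
  have hdist : ∀ P ∈ degreeLT F k, P ≠ 0 → m - k + 1 ≤ (Φ P).rank := fun _ hP hP0 =>
    sub_add_one_le_rank_evalMatrix v hα hτ hkm hP hP0
  have hsub : ∀ P Q, Φ P - Φ Q = Φ (P - Q) := fun P Q => by
    simp only [Φ, map_sub, evalMatrix_sub]
  have hinj : Set.InjOn Φ (degreeLT F k) := fun P hP Q hQ h => by
    by_contra hne
    have := hdist _ (sub_mem hP hQ) (sub_ne_zero.mpr hne)
    rw [← hsub, h, sub_self, Matrix.rank_zero] at this
    omega
  rw [gabCode_eq_image]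
  refine ⟨?_, ?_, ?_⟩
  · have hF : Nat.card F = Fintype.card K ^ n := by
      rw [Nat.card_congr v.toEquiv, Nat.card_fun, Nat.card_fin, Nat.card_eq_fintype_card]
    rw [Nat.card_image_of_injOn hinj, pow_mul, ← hF]
    exact natCard_degreeLT F k
  · rintro _ ⟨P, hP, rfl⟩ _ ⟨Q, hQ, rfl⟩ hne
    rw [hsub]
    exact hdist _ (sub_mem hP hQ) (sub_ne_zero.mpr fun h => hne (h ▸ rfl))
  · obtain ⟨P, hP, hP0, hrank⟩ : ∃ P ∈ degreeLT F k, P ≠ 0 ∧ (Φ P).rank ≤ m - (k - 1) :=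
      exists_mem_degreeLT_rank_evalMatrix_le v hα τ hk hkm
    refine ⟨Φ P, ⟨P, hP, rfl⟩, Φ 0, ⟨0, zero_mem _, rfl⟩,
      fun h => hP0 (hinj hP (zero_mem _) h), ?_⟩
    have := hdist P hP hP0
    rw [hsub, sub_zero]
    omega

/-- The projected Gabidulin code `π_U(G_{k,s})` has exactly `q^{nk}` elements and
minimum rank distance `m - k + 1`; in particular (since
`q^{nk} = q^{n(m - (m-k+1) + 1)}`) it is an MRD code. -/
theorem gabidulin_code_is_MRD
    (K F : Type*) [Field K] [Fintype K] [Field F] [Algebra K F]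
    (q k s m n : ℕ) (hq : q = Fintype.card K) (hn : Module.finrank K F = n)
    (hs : 0 < s) (hgcd : Nat.gcd s n = 1) (hk : 0 < k) (hkm : k ≤ m) (hmn : m ≤ n)
    (U : Submodule K F) (hU : Module.finrank K U = m)
    (α : Fin m → F) (hα : LinearIndependent K α)
    (hαspan : Submodule.span K (Set.range α) = U)
    (v : F ≃ₗ[K] (Fin n → K)) :
    Nat.card (gabCode q k s m n α v) = q ^ (n * k) ∧
    (∀ A ∈ gabCode q k s m n α v, ∀ B ∈ gabCode q k s m n α v,
      A ≠ B → m - k + 1 ≤ (A - B).rank) ∧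
    (∃ A ∈ gabCode q k s m n α v, ∃ B ∈ gabCode q k s m n α v,
      A ≠ B ∧ (A - B).rank = m - k + 1) :=
  gabidulin_code_is_MRD_general K F q k s m n hq hgcd hk hkm α hα v
end
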